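/- For natural numbers κ, λ and an integer r ≥ 1, the number of triples (P₁′,P₂′,P₃′) of pairwise non-intersecting upright lattice paths from (0,2),(1,1),(2,0) to (κ+1−r, λ+1+r), (κ+1, λ+1), (κ+1+r, λ+1−r) respectively is given by the Gessel–Viennot determinant of the 3x3 matrix whose (i,j) entry is the binomial coefficient counting paths from the i-th start to the j-th end, and this determinant equals (2r³/((κ+λ+1)(κ+λ+2)²)) · C(κ+λ+2, κ+1) · C(κ+λ+2, κ−r+1) · C(κ+λ+2, κ+r+1). -/

import Mathlib

/-- Binomial coefficient with integer lower index, `0` when the index is negative. -/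
def bin (n : ℕ) (m : ℤ) : ℚ := if 0 ≤ m then (n.choose m.toNat : ℚ) else 0

/-- An upright lattice path with `m` unit steps `(1,0)` or `(0,1)` in `ℤ × ℤ`,
from `s` to `t`, recorded as the sequence of its `m+1` visited points. -/
def IsPathZ (m : ℕ) (s t : ℤ × ℤ) (p : Fin (m + 1) → ℤ × ℤ) : Prop :=
  p 0 = s ∧ p (Fin.last m) = t ∧
    ∀ i : Fin m, p i.succ = p i.castSucc + (1, 0) ∨ p i.succ = p i.castSucc + (0, 1)

/-- Two paths are non-intersecting if they share no point. -/
def NoninterZ {m : ℕ} (p q : Fin (m + 1) → ℤ × ℤ) : Prop := ∀ i j, p i ≠ q j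

/-- `x`-coordinates of the three starting points `(0,2), (1,1), (2,0)`. -/
def xs : Fin 3 → ℤ := ![0, 1, 2]

/-- `x`-coordinates of the three endpoints, depending on `κ` and `r`. -/
def xe (κ r : ℕ) : Fin 3 → ℤ := ![(κ : ℤ) + 1 - r, (κ : ℤ) + 1, (κ : ℤ) + 1 + r]

/-!
Each step raises `x + y` by one and all three paths start on the antidiagonal `x + y = 2`, so after
`i` steps every path lies on `x + y = 2 + i`. A path is thus determined by its sequence of
`x`-coordinates, and two paths meet iff they meet at the same time, i.e. iff their `x`-sequences
agree somewhere. Splitting pointwise-distinct triples of `x`-sequences with endpoints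
`c₁ < c₂ < c₃` according to their last steps gives a recursion over the eight step patterns; by
Pascal's rule in each column the determinant satisfies the same recursion, coinciding endpoints give
`0` on both sides, and both agree for paths of length `0`.

For the closed form, `C(n, c - j)` is a quadratic polynomial in `c` times
`C(n + 2, c) / ((n + 1) (n + 2))`, so the determinant is a Vandermonde determinant in
`c₁, c₂, c₃` times `∏ C(n + 2, cᵢ)`.
-/

def IsStepSeq (m : ℕ) (x y : ℤ) (f : Fin (m + 1) → ℤ) : Prop :=
  f 0 = x ∧ f (Fin.last m) = y ∧
    ∀ i : Fin m, f i.succ = f i.castSucc ∨ f i.succ = f i.castSucc + 1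

lemma isStepSeq_zero_iff {x y : ℤ} {f : Fin 1 → ℤ} :
    IsStepSeq 0 x y f ↔ f = (fun _ => x) ∧ x = y := by
  constructor
  · rintro ⟨h0, hl, -⟩
    exact ⟨funext fun i => by rw [Subsingleton.elim i 0, h0], h0 ▸ hl⟩
  · rintro ⟨rfl, rfl⟩
    exact ⟨rfl, rfl, fun i => i.elim0⟩

lemma isStepSeq_succ_iff {m : ℕ} {x y : ℤ} {f : Fin (m + 2) → ℤ} :
    IsStepSeq (m + 1) x y f ↔
      f (Fin.last (m + 1)) = y ∧ ∃ b : Bool, IsStepSeq m x (y - b.toNat) (Fin.init f) := by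
  simp only [IsStepSeq, Fin.forall_fin_succ' (n := m), Fin.init, Fin.succ_castSucc, Fin.succ_last,
    Fin.castSucc_zero]
  constructor
  · rintro ⟨h0, rfl, hs, hl⟩
    refine ⟨rfl, decide (f (Fin.last m).castSucc ≠ f (Fin.last (m + 1))), h0, ?_, hs⟩
    rcases hl with hl | hl <;> rw [hl] <;> simp
  · rintro ⟨rfl, b, h0, hl, hs⟩
    exact ⟨h0, rfl, hs, by cases b <;> simp [hl]⟩

namespace IsStepSeq

variable {m : ℕ} {x y : ℤ} {f : Fin (m + 1) → ℤ}

lemma mem_Icc (h : IsStepSeq m x y f) (i : Fin (m + 1)) : f i ∈ Set.Icc x (x + i) := by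
  induction i using Fin.induction with
  | zero => simp [h.1]
  | succ j ih =>
    rcases h.2.2 j with hs | hs <;>
      simp only [hs, Set.mem_Icc, Fin.val_succ, Fin.val_castSucc] at ih ⊢ <;> push_cast <;> omega

lemma finite_setOf (m : ℕ) (x y : ℤ) : {f | IsStepSeq m x y f}.Finite :=
  (Set.Finite.pi fun _ => Set.finite_Icc x (x + m)).subset fun f hf i _ => by
    have := hf.mem_Icc i
    exact ⟨this.1, this.2.trans (by have := i.is_le; omega)⟩

lemma snoc {b : Bool} {g : Fin (m + 1) → ℤ}
    (h : IsStepSeq m x (y - b.toNat) g) : IsStepSeq (m + 1) x y (Fin.snoc g y) :=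
  isStepSeq_succ_iff.mpr ⟨Fin.snoc_last _ _, b, by rwa [Fin.init_snoc]⟩

end IsStepSeq

def stepTriples (m : ℕ) (c₁ c₂ c₃ : ℤ) :
    Set ((Fin (m + 1) → ℤ) × (Fin (m + 1) → ℤ) × (Fin (m + 1) → ℤ)) :=
  {t | IsStepSeq m 0 c₁ t.1 ∧ IsStepSeq m 1 c₂ t.2.1 ∧ IsStepSeq m 2 c₃ t.2.2 ∧
    (∀ i, t.1 i ≠ t.2.1 i) ∧ (∀ i, t.1 i ≠ t.2.2 i) ∧ (∀ i, t.2.1 i ≠ t.2.2 i)}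

instance (m : ℕ) (c₁ c₂ c₃ : ℤ) : Finite (stepTriples m c₁ c₂ c₃) :=
  Set.Finite.to_subtype <| ((IsStepSeq.finite_setOf m 0 c₁).prod
    ((IsStepSeq.finite_setOf m 1 c₂).prod (IsStepSeq.finite_setOf m 2 c₃))).subset
      fun _ ht => ⟨ht.1, ht.2.1, ht.2.2.1⟩

lemma stepTriples_zero (c₁ c₂ c₃ : ℤ) :
    stepTriples 0 c₁ c₂ c₃ =
      if c₁ = 0 ∧ c₂ = 1 ∧ c₃ = 2 then {(fun _ => 0, fun _ => 1, fun _ => 2)} else ∅ := by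
  ext ⟨f₁, f₂, f₃⟩
  simp only [stepTriples, isStepSeq_zero_iff, Set.mem_ofPred_eq]
  split_ifs with hc
  · obtain ⟨rfl, rfl, rfl⟩ := hc
    constructor
    · rintro ⟨⟨rfl, -⟩, ⟨rfl, -⟩, ⟨rfl, -⟩, -⟩
      rfl
    · rintro ⟨⟩
      simp
  · simp only [Set.mem_empty_iff_false, iff_false]
    rintro ⟨⟨-, rfl⟩, ⟨-, rfl⟩, ⟨-, rfl⟩, -⟩
    exact hc ⟨rfl, rfl, rfl⟩

lemma stepTriples_eq_empty_of_left {m : ℕ} {c₁ c₂ c₃ : ℤ} (h : c₁ = c₂) :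
    stepTriples m c₁ c₂ c₃ = ∅ :=
  Set.eq_empty_of_forall_notMem fun _ ht => ht.2.2.2.1 _ (ht.1.2.1.trans (h.trans ht.2.1.2.1.symm))

lemma stepTriples_eq_empty_of_right {m : ℕ} {c₁ c₂ c₃ : ℤ} (h : c₂ = c₃) :
    stepTriples m c₁ c₂ c₃ = ∅ :=
  Set.eq_empty_of_forall_notMem fun _ ht =>
    ht.2.2.2.2.2 _ (ht.2.1.2.1.trans (h.trans ht.2.2.1.2.1.symm))

lemma snoc_ne_snoc {m : ℕ} {g g' : Fin (m + 1) → ℤ} {y y' : ℤ} (hg : ∀ i, g i ≠ g' i)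
    (hy : y ≠ y') :
    ∀ i, (Fin.snoc g y : Fin (m + 2) → ℤ) i ≠ (Fin.snoc g' y' : Fin (m + 2) → ℤ) i :=
  Fin.forall_fin_succ'.mpr ⟨fun i => by simpa using hg i, by simpa using hy⟩

noncomputable def stepTriplesSuccEquiv {m : ℕ} {c₁ c₂ c₃ : ℤ} (h₁₂ : c₁ < c₂) (h₂₃ : c₂ < c₃) :
    (Σ ε : Bool × Bool × Bool,
      stepTriples m (c₁ - ε.1.toNat) (c₂ - ε.2.1.toNat) (c₃ - ε.2.2.toNat)) ≃
      stepTriples (m + 1) c₁ c₂ c₃ := by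
  refine Equiv.ofBijective
    (fun a => ⟨(Fin.snoc a.2.1.1 c₁, Fin.snoc a.2.1.2.1 c₂, Fin.snoc a.2.1.2.2 c₃), ?_⟩) ⟨?_, ?_⟩
  · obtain ⟨ε, t, h₁, h₂, h₃, d₁₂, d₁₃, d₂₃⟩ := a
    exact ⟨h₁.snoc, h₂.snoc, h₃.snoc, snoc_ne_snoc d₁₂ h₁₂.ne, snoc_ne_snoc d₁₃ (h₁₂.trans h₂₃).ne,
      snoc_ne_snoc d₂₃ h₂₃.ne⟩
  · rintro ⟨ε, t, ht⟩ ⟨ε', t', ht'⟩ h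
    simp only [Subtype.mk.injEq, Prod.mk.injEq] at h
    obtain ⟨e₁, e₂, e₃⟩ := h
    have ht_eq : t = t' := by
      have i₁ := congrArg Fin.init e₁
      have i₂ := congrArg Fin.init e₂
      have i₃ := congrArg Fin.init e₃
      simp only [Fin.init_snoc] at i₁ i₂ i₃
      exact Prod.ext i₁ (Prod.ext i₂ i₃)
    subst ht_eq
    have toNat_inj {x : ℤ} {b b' : Bool} (h : x - b.toNat = x - b'.toNat) : b = b' := by
      cases b <;> cases b' <;> simp at h ⊢; omega
    refine Sigma.subtype_ext (Prod.ext ?_ (Prod.ext ?_ ?_)) rfl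
    · exact toNat_inj (ht.1.2.1.symm.trans ht'.1.2.1)
    · exact toNat_inj (ht.2.1.2.1.symm.trans ht'.2.1.2.1)
    · exact toNat_inj (ht.2.2.1.2.1.symm.trans ht'.2.2.1.2.1)
  · rintro ⟨⟨f₁, f₂, f₃⟩, h₁, h₂, h₃, d₁₂, d₁₃, d₂₃⟩
    obtain ⟨l₁, b₁, g₁⟩ := isStepSeq_succ_iff.mp h₁
    obtain ⟨l₂, b₂, g₂⟩ := isStepSeq_succ_iff.mp h₂
    obtain ⟨l₃, b₃, g₃⟩ := isStepSeq_succ_iff.mp h₃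
    refine ⟨⟨(b₁, b₂, b₃), (Fin.init f₁, Fin.init f₂, Fin.init f₃), g₁, g₂, g₃,
      fun _ => d₁₂ _, fun _ => d₁₃ _, fun _ => d₂₃ _⟩, ?_⟩
    simp only [← l₁, ← l₂, ← l₃, Fin.snoc_init_self]

noncomputable def lgvDet (m : ℕ) (c₁ c₂ c₃ : ℤ) : ℚ :=
  (Matrix.of fun i j : Fin 3 => bin m (![c₁, c₂, c₃] j - xs i)).det

lemma bin_zero_left (k : ℤ) : bin 0 k = if k = 0 then 1 else 0 := by
  unfold bin
  rcases lt_trichotomy k 0 with h | rfl | h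
  · rw [if_neg (by omega), if_neg (by omega)]
  · simp
  · rw [if_pos h.le, if_neg h.ne', Nat.choose_eq_zero_of_lt (by omega), Nat.cast_zero]

lemma bin_succ_left (m : ℕ) (k : ℤ) : bin (m + 1) k = bin m (k - 1) + bin m k := by
  unfold bin
  rcases lt_trichotomy k 0 with h | rfl | h
  · rw [if_neg (by omega), if_neg (by omega), if_neg (by omega), add_zero]
  · simp
  · rw [if_pos (by omega), if_pos (by omega), if_pos (by omega),
      show k.toNat = (k - 1).toNat + 1 by omega, Nat.choose_succ_succ, Nat.cast_add]

lemma lgvDet_succ (m : ℕ) (c₁ c₂ c₃ : ℤ) :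
    lgvDet (m + 1) c₁ c₂ c₃ = ∑ ε : Bool × Bool × Bool,
      lgvDet m (c₁ - ε.1.toNat) (c₂ - ε.2.1.toNat) (c₃ - ε.2.2.toNat) := by
  simp only [lgvDet, Matrix.det_fin_three, Matrix.of_apply, xs, Matrix.cons_val_zero,
    Matrix.cons_val_one, Matrix.cons_val_two, Matrix.head_cons, Matrix.tail_cons, bin_succ_left,
    Fintype.sum_prod_type, Fintype.sum_bool, Bool.toNat_true, Bool.toNat_false]
  ring_nf

lemma lgvDet_self_left (m : ℕ) (c c₃ : ℤ) : lgvDet m c c c₃ = 0 :=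
  Matrix.det_zero_of_column_eq (i := 0) (j := 1) (by decide) fun _ => rfl

lemma lgvDet_self_right (m : ℕ) (c₁ c : ℤ) : lgvDet m c₁ c c = 0 :=
  Matrix.det_zero_of_column_eq (i := 1) (j := 2) (by decide) fun _ => rfl

lemma lgvDet_zero {c₁ c₂ c₃ : ℤ} (h₁₂ : c₁ ≤ c₂) (h₂₃ : c₂ ≤ c₃) :
    lgvDet 0 c₁ c₂ c₃ = if c₁ = 0 ∧ c₂ = 1 ∧ c₃ = 2 then 1 else 0 := by
  split_ifs with hc
  · obtain ⟨rfl, rfl, rfl⟩ := hc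
    simp [lgvDet, Matrix.det_fin_three, xs, bin_zero_left]
  rcases h₁₂.eq_or_lt with rfl | h₁₂
  · exact lgvDet_self_left 0 _ _
  rcases h₂₃.eq_or_lt with rfl | h₂₃
  · exact lgvDet_self_right 0 _ _
  have column_eq_zero {c : ℤ} (j : Fin 3) (hc : c < 0 ∨ 2 < c) (hj : ![c₁, c₂, c₃] j = c) :
      lgvDet 0 c₁ c₂ c₃ = 0 :=
    Matrix.det_eq_zero_of_column_eq_zero j fun i => by
      fin_cases i <;> simp [hj, xs, bin_zero_left] <;> omega
  rcases lt_or_ge c₁ 0 with h₁ | h₁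
  · exact column_eq_zero (c := c₁) 0 (.inl h₁) rfl
  · exact column_eq_zero (c := c₃) 2 (.inr (by omega)) rfl

lemma card_stepTriples (m : ℕ) {c₁ c₂ c₃ : ℤ} (h₁₂ : c₁ ≤ c₂) (h₂₃ : c₂ ≤ c₃) :
    (Nat.card (stepTriples m c₁ c₂ c₃) : ℚ) = lgvDet m c₁ c₂ c₃ := by
  induction m generalizing c₁ c₂ c₃ with
  | zero =>
    rw [stepTriples_zero, lgvDet_zero h₁₂ h₂₃]
    split_ifs <;> simp
  | succ m ih =>
    rcases h₁₂.eq_or_lt with rfl | h₁₂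
    · simp [stepTriples_eq_empty_of_left, lgvDet_self_left]
    rcases h₂₃.eq_or_lt with rfl | h₂₃
    · simp [stepTriples_eq_empty_of_right, lgvDet_self_right]
    rw [← Nat.card_congr (stepTriplesSuccEquiv h₁₂ h₂₃), Nat.card_sigma, lgvDet_succ, Nat.cast_sum]
    refine Finset.sum_congr rfl fun ε _ => ih ?_ ?_
    · have := ε.1.toNat_le; have := ε.2.1.toNat_le; omega
    · have := ε.2.1.toNat_le; have := ε.2.2.toNat_le; omega

def toPath (a : ℤ) {m : ℕ} (f : Fin (m + 1) → ℤ) : Fin (m + 1) → ℤ × ℤ :=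
  fun i => (f i, a + i - f i)

namespace IsPathZ

variable {m : ℕ} {s t : ℤ × ℤ} {p : Fin (m + 1) → ℤ × ℤ}

lemma fst_add_snd {a : ℤ} (h : IsPathZ m s t p) (ha : s.1 + s.2 = a) (i : Fin (m + 1)) :
    (p i).1 + (p i).2 = a + i := by
  induction i using Fin.induction with
  | zero => simp [h.1, ha]
  | succ j ih =>
    rcases h.2.2 j with hs | hs <;> simp only [hs, Prod.fst_add, Prod.snd_add, Fin.val_succ,
      Fin.val_castSucc] at ih ⊢ <;> push_cast <;> linarith

lemma isStepSeq_fst (h : IsPathZ m s t p) : IsStepSeq m s.1 t.1 fun i => (p i).1 :=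
  ⟨by simp [h.1], by simp [h.2.1], fun i => by rcases h.2.2 i with hs | hs <;> simp [hs]⟩

lemma toPath_fst {a : ℤ} (h : IsPathZ m s t p) (ha : s.1 + s.2 = a) :
    toPath a (fun i => (p i).1) = p :=
  funext fun i => Prod.ext rfl (by simp only [toPath]; linarith [h.fst_add_snd ha i])

end IsPathZ

lemma toPath_fst_add_snd (a : ℤ) {m : ℕ} (f : Fin (m + 1) → ℤ) (i : Fin (m + 1)) :
    (toPath a f i).1 + (toPath a f i).2 = a + i := by
  simp [toPath]

lemma isPathZ_toPath {m : ℕ} {a : ℤ} {s t : ℤ × ℤ} {f : Fin (m + 1) → ℤ}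
    (h : IsStepSeq m s.1 t.1 f) (hs : s.1 + s.2 = a) (ht : t.1 + t.2 = a + m) :
    IsPathZ m s t (toPath a f) := by
  refine ⟨Prod.ext ?_ ?_, Prod.ext ?_ ?_, fun i => ?_⟩
  · simp [toPath, h.1]
  · simp [toPath, h.1]; linarith
  · simp [toPath, h.2.1]
  · simp [toPath, h.2.1]; linarith
  · rcases h.2.2 i with hstep | hstep
    · right; ext <;> simp [toPath, hstep]; ring
    · left; ext <;> simp [toPath, hstep]; ring

lemma noninterZ_iff_fst_ne {m : ℕ} {a : ℤ} {p q : Fin (m + 1) → ℤ × ℤ}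
    (hp : ∀ i, (p i).1 + (p i).2 = a + i) (hq : ∀ i, (q i).1 + (q i).2 = a + i) :
    NoninterZ p q ↔ ∀ i, (p i).1 ≠ (q i).1 := by
  refine ⟨fun h i he => h i i (Prod.ext he (by linarith [hp i, hq i])), fun h i j he => ?_⟩
  have hij : i = j := Fin.ext (by have := hp i; have := hq j; rw [he] at *; omega)
  subst hij
  exact h i (congrArg Prod.fst he)

def nonintersectingPathsEquiv (m : ℕ) {c₁ c₂ c₃ d₁ d₂ d₃ : ℤ} (h₁ : c₁ + d₁ = 2 + m)
    (h₂ : c₂ + d₂ = 2 + m) (h₃ : c₃ + d₃ = 2 + m) :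
    {t : (Fin (m + 1) → ℤ × ℤ) × (Fin (m + 1) → ℤ × ℤ) × (Fin (m + 1) → ℤ × ℤ) //
        IsPathZ m (0, 2) (c₁, d₁) t.1 ∧ IsPathZ m (1, 1) (c₂, d₂) t.2.1 ∧
        IsPathZ m (2, 0) (c₃, d₃) t.2.2 ∧
        NoninterZ t.1 t.2.1 ∧ NoninterZ t.1 t.2.2 ∧ NoninterZ t.2.1 t.2.2} ≃
      stepTriples m c₁ c₂ c₃ where
  toFun t :=
    ⟨(fun i => (t.1.1 i).1, fun i => (t.1.2.1 i).1, fun i => (t.1.2.2 i).1), by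
      obtain ⟨⟨p₁, p₂, p₃⟩, hp₁, hp₂, hp₃, n₁₂, n₁₃, n₂₃⟩ := t
      have s₁ := hp₁.fst_add_snd (a := 2) rfl
      have s₂ := hp₂.fst_add_snd (a := 2) rfl
      have s₃ := hp₃.fst_add_snd (a := 2) rfl
      exact ⟨hp₁.isStepSeq_fst, hp₂.isStepSeq_fst, hp₃.isStepSeq_fst,
        (noninterZ_iff_fst_ne s₁ s₂).mp n₁₂, (noninterZ_iff_fst_ne s₁ s₃).mp n₁₃,
        (noninterZ_iff_fst_ne s₂ s₃).mp n₂₃⟩⟩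
  invFun f :=
    ⟨(toPath 2 f.1.1, toPath 2 f.1.2.1, toPath 2 f.1.2.2), by
      obtain ⟨⟨f₁, f₂, f₃⟩, hf₁, hf₂, hf₃, d₁₂, d₁₃, d₂₃⟩ := f
      have s₁ := toPath_fst_add_snd 2 f₁
      have s₂ := toPath_fst_add_snd 2 f₂
      have s₃ := toPath_fst_add_snd 2 f₃
      exact ⟨isPathZ_toPath hf₁ (by norm_num) h₁, isPathZ_toPath hf₂ (by norm_num) h₂,
        isPathZ_toPath hf₃ (by norm_num) h₃, (noninterZ_iff_fst_ne s₁ s₂).mpr d₁₂,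
        (noninterZ_iff_fst_ne s₁ s₃).mpr d₁₃, (noninterZ_iff_fst_ne s₂ s₃).mpr d₂₃⟩⟩
  left_inv t := Subtype.ext <| Prod.ext (t.2.1.toPath_fst (by norm_num))
    (Prod.ext (t.2.2.1.toPath_fst (by norm_num)) (t.2.2.2.1.toPath_fst (by norm_num)))
  right_inv f := rfl

/-- `1 / Γ(k + 1)` at integers `k`. -/
noncomputable def invFact (k : ℤ) : ℚ := if 0 ≤ k then ((k.toNat).factorial : ℚ)⁻¹ else 0

lemma invFact_sub_one (k : ℤ) : invFact (k - 1) = k * invFact k := by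
  unfold invFact
  rcases lt_trichotomy k 0 with h | rfl | h
  · rw [if_neg (by omega), if_neg (by omega), mul_zero]
  · simp
  · obtain ⟨n, rfl⟩ : ∃ n : ℕ, k = n + 1 := ⟨(k - 1).toNat, by omega⟩
    rw [if_pos (by omega), if_pos (by omega), add_sub_cancel_right, Int.toNat_natCast,
      show ((n : ℤ) + 1).toNat = n + 1 by omega, Nat.factorial_succ]
    push_cast
    field_simp

lemma bin_eq_factorial_mul_invFact (n : ℕ) (k : ℤ) :
    bin n k = n.factorial * invFact k * invFact (n - k) := by
  unfold bin invFact
  by_cases h₀ : 0 ≤ k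
  · by_cases hn : k ≤ n
    · rw [if_pos h₀, if_pos h₀, if_pos (by omega), Nat.cast_choose ℚ (by omega : k.toNat ≤ n),
        show ((n : ℤ) - k).toNat = n - k.toNat by omega]
      field_simp
    · rw [if_pos h₀, if_neg (show ¬(0 : ℤ) ≤ n - k by omega),
        Nat.choose_eq_zero_of_lt (by omega), Nat.cast_zero, mul_zero]
  · rw [if_neg h₀, if_neg h₀, mul_zero, zero_mul]

lemma factorial_add_two_eq (n : ℕ) :
    ((n + 2).factorial : ℚ) = (n + 1) * (n + 2) * n.factorial := by
  push_cast [Nat.factorial_succ]; ring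

lemma bin_eq_mul_bin_add_two (n : ℕ) (c : ℤ) :
    bin n c = (n + 1 - c) * (n + 2 - c) / ((n + 1) * (n + 2)) * bin (n + 2) c := by
  rw [bin_eq_factorial_mul_invFact, bin_eq_factorial_mul_invFact, factorial_add_two_eq,
    show (n : ℤ) - c = ((n + 2 : ℕ) - c) - 1 - 1 by push_cast; ring, invFact_sub_one,
    invFact_sub_one]
  field_simp
  push_cast
  ring

lemma bin_sub_one_eq_mul_bin_add_two (n : ℕ) (c : ℤ) :
    bin n (c - 1) = c * (n + 2 - c) / ((n + 1) * (n + 2)) * bin (n + 2) c := by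
  rw [bin_eq_factorial_mul_invFact, bin_eq_factorial_mul_invFact, factorial_add_two_eq,
    show (n : ℤ) - (c - 1) = ((n + 2 : ℕ) - c) - 1 by push_cast; ring, invFact_sub_one,
    invFact_sub_one]
  field_simp
  push_cast
  ring

lemma bin_sub_two_eq_mul_bin_add_two (n : ℕ) (c : ℤ) :
    bin n (c - 2) = c * (c - 1) / ((n + 1) * (n + 2)) * bin (n + 2) c := by
  rw [bin_eq_factorial_mul_invFact, bin_eq_factorial_mul_invFact, factorial_add_two_eq,
    show (n : ℤ) - (c - 2) = (n + 2 : ℕ) - c by push_cast; ring, show c - 2 = c - 1 - 1 by ring,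
    invFact_sub_one, invFact_sub_one]
  field_simp
  push_cast
  ring

lemma lgvDet_eq (n : ℕ) (c₁ c₂ c₃ : ℤ) :
    lgvDet n c₁ c₂ c₃ = ((c₂ : ℚ) - c₁) * (c₃ - c₁) * (c₃ - c₂) / ((n + 1) * (n + 2) ^ 2) *
      bin (n + 2) c₁ * bin (n + 2) c₂ * bin (n + 2) c₃ := by
  simp only [lgvDet, Matrix.det_fin_three, Matrix.of_apply, xs, Matrix.cons_val_zero,
    Matrix.cons_val_one, Matrix.cons_val_two, Matrix.head_cons, Matrix.tail_cons, sub_zero,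
    bin_eq_mul_bin_add_two n c₁, bin_eq_mul_bin_add_two n c₂, bin_eq_mul_bin_add_two n c₃,
    bin_sub_one_eq_mul_bin_add_two, bin_sub_two_eq_mul_bin_add_two]
  field_simp
  ring

theorem symmetric_triples_count_general (κ lam r : ℕ) :
    (Nat.card {t : (Fin (κ + lam + 1) → ℤ × ℤ) × (Fin (κ + lam + 1) → ℤ × ℤ) ×
          (Fin (κ + lam + 1) → ℤ × ℤ) //
        IsPathZ (κ + lam) (0, 2) ((κ : ℤ) + 1 - r, (lam : ℤ) + 1 + r) t.1 ∧
        IsPathZ (κ + lam) (1, 1) ((κ : ℤ) + 1, (lam : ℤ) + 1) t.2.1 ∧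
        IsPathZ (κ + lam) (2, 0) ((κ : ℤ) + 1 + r, (lam : ℤ) + 1 - r) t.2.2 ∧
        NoninterZ t.1 t.2.1 ∧ NoninterZ t.1 t.2.2 ∧ NoninterZ t.2.1 t.2.2} : ℚ)
      = (Matrix.of fun i j : Fin 3 => bin (κ + lam) (xe κ r j - xs i)).det ∧
    (Matrix.of fun i j : Fin 3 => bin (κ + lam) (xe κ r j - xs i)).det
      = (2 * (r : ℚ) ^ 3 / (((κ : ℚ) + lam + 1) * ((κ : ℚ) + lam + 2) ^ 2)) *
          bin (κ + lam + 2) ((κ : ℤ) + 1) * bin (κ + lam + 2) ((κ : ℤ) - r + 1) *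
          bin (κ + lam + 2) ((κ : ℤ) + r + 1) := by
  have hdet : (Matrix.of fun i j : Fin 3 => bin (κ + lam) (xe κ r j - xs i)).det =
      lgvDet (κ + lam) (κ + 1 - r) (κ + 1) (κ + 1 + r) := rfl
  refine ⟨?_, ?_⟩
  · rw [Nat.card_congr (nonintersectingPathsEquiv (κ + lam) (by push_cast; ring)
      (by push_cast; ring) (by push_cast; ring)), hdet, card_stepTriples _ (by omega) (by omega)]
  · rw [hdet, lgvDet_eq, show (κ : ℤ) - r + 1 = κ + 1 - r by ring,
      show (κ : ℤ) + r + 1 = κ + 1 + r by ring]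
    push_cast
    ring

theorem symmetric_triples_count (κ lam r : ℕ) (hr : 1 ≤ r) :
    (Nat.card {t : (Fin (κ + lam + 1) → ℤ × ℤ) × (Fin (κ + lam + 1) → ℤ × ℤ) ×
          (Fin (κ + lam + 1) → ℤ × ℤ) //
        IsPathZ (κ + lam) (0, 2) ((κ : ℤ) + 1 - r, (lam : ℤ) + 1 + r) t.1 ∧
        IsPathZ (κ + lam) (1, 1) ((κ : ℤ) + 1, (lam : ℤ) + 1) t.2.1 ∧
        IsPathZ (κ + lam) (2, 0) ((κ : ℤ) + 1 + r, (lam : ℤ) + 1 - r) t.2.2 ∧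
        NoninterZ t.1 t.2.1 ∧ NoninterZ t.1 t.2.2 ∧ NoninterZ t.2.1 t.2.2} : ℚ)
      = (Matrix.of fun i j : Fin 3 => bin (κ + lam) (xe κ r j - xs i)).det ∧
    (Matrix.of fun i j : Fin 3 => bin (κ + lam) (xe κ r j - xs i)).det
      = (2 * (r : ℚ) ^ 3 / (((κ : ℚ) + lam + 1) * ((κ : ℚ) + lam + 2) ^ 2)) *
          bin (κ + lam + 2) ((κ : ℤ) + 1) * bin (κ + lam + 2) ((κ : ℤ) - r + 1) *
          bin (κ + lam + 2) ((κ : ℤ) + r + 1) :=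
  symmetric_triples_count_general κ lam r
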